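/- Hartogs extension for the cone: every regular function on the complement of the origin in the affine quadric cone V(ad - bc) ⊂ ℂ⁴ extends uniquely to a global regular function, hence is the restriction of a polynomial in a, b, c, d. -/

import Mathlib

/-!
The Segre map `(a, b, c, d) ↦ (ac, ad, bc, bd)` sends the set of pairs `((a, b), (c, d))` of
nonzero vectors of `ℂ²` onto the punctured cone, and along it `f` pulls back to a function that is
locally a fraction of polynomials. The complement of that set has codimension two, so a polynomial
without zeros on it is constant. Writing one local fraction in lowest terms, its denominator
divides every other local denominator, hence is a nonzero constant, and the pullback of `f` is a
polynomial `G`. Being constant on the fibres of the Segre map, `G` is invariant under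
`(a, b, c, d) ↦ (ta, tb, c, d)` versus `(a, b, tc, td)`; so each of its monomials has the same
degree in `(a, b)` as in `(c, d)`, and is therefore a monomial in `ac, ad, bc, bd`. Uniqueness
holds because the origin lies in the closure of the punctured cone.
-/

open MvPolynomial

/-- The affine quadric cone `V(ad - bc) ⊂ ℂ⁴`, coordinates `(a,b,c,d) = (x 0, x 1, x 2, x 3)`. -/
def quadCone : Set (Fin 4 → ℂ) := {x | x 0 * x 3 - x 1 * x 2 = 0}

namespace MvPolynomial

section CommSemiring

variable {σ R : Type*} [CommSemiring R]

theorem eval_aeval {τ : Type*} (x : τ → R) (g : σ → MvPolynomial τ R) (p : MvPolynomial σ R) :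
    eval x (aeval g p) = eval (fun i => eval x (g i)) p :=
  comp_aeval_apply g (aeval x) p

noncomputable def weightScale (w : σ → ℕ) : MvPolynomial σ R →ₐ[R] Polynomial (MvPolynomial σ R) :=
  aeval fun i => Polynomial.C (X i) * Polynomial.X ^ w i

theorem weightScale_monomial (w : σ → ℕ) (m : σ →₀ ℕ) (r : R) :
    weightScale w (monomial m r) = Polynomial.monomial (Finsupp.weight w m) (monomial m r) := by
  rw [weightScale, aeval_monomial, Finsupp.weight_apply, monomial_eq,
    ← Polynomial.C_mul_X_pow_eq_monomial]
  simp only [mul_pow, Finsupp.prod_mul, ← pow_mul, smul_eq_mul, map_mul, map_finsuppProd, map_pow]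
  simp only [Finsupp.prod, Finsupp.sum, Finset.prod_pow_eq_pow_sum, mul_comm (w _)]
  simp only [Polynomial.algebraMap_apply, algebraMap_eq, mul_assoc]

theorem coeff_weightScale (w : σ → ℕ) (p : MvPolynomial σ R) (n : ℕ) :
    (weightScale w p).coeff n = weightedHomogeneousComponent w n p := by
  classical
  induction p using MvPolynomial.induction_on' with
  | monomial m r =>
    ext d
    rw [weightScale_monomial, Polynomial.coeff_monomial, coeff_weightedHomogeneousComponent]
    rcases eq_or_ne m d with rfl | hmd
    · split_ifs <;> simp
    · split_ifs <;> simp [coeff_monomial, hmd]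
  | add p q hp hq => simp only [map_add, Polynomial.coeff_add, hp, hq]

theorem eval_map_weightScale (w : σ → ℕ) (p : MvPolynomial σ R) (x : σ → R) (t : R) :
    ((weightScale w p).map (eval x)).eval t = eval (fun i => x i * t ^ w i) p := by
  induction p using MvPolynomial.induction_on with
  | C r => simp [weightScale]
  | add p q hp hq => simp [hp, hq]
  | mul_X p i hp => simp [← hp, weightScale]

end CommSemiring

section Domain

variable {σ R : Type*} [CommRing R] [IsDomain R] [Infinite R]

theorem eq_zero_of_eval_eq_zero_of_eval_ne_zero {F g : MvPolynomial σ R} (hg : g ≠ 0)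
    (h : ∀ x, eval x g ≠ 0 → eval x F = 0) : F = 0 := by
  refine (mul_eq_zero.mp (funext fun x => ?_)).resolve_right hg
  by_cases hx : eval x g = 0 <;> simp [hx, h]

theorem polynomial_eq_of_eval_map_eq {P Q : Polynomial (MvPolynomial σ R)} {g : MvPolynomial σ R}
    (hg : g ≠ 0) (h : ∀ x, eval x g ≠ 0 → ∀ t ≠ 0,
      (P.map (eval x)).eval t = (Q.map (eval x)).eval t) : P = Q := by
  ext n : 1
  rw [← sub_eq_zero, ← Polynomial.coeff_sub]
  refine eq_zero_of_eval_eq_zero_of_eval_ne_zero hg fun x hx => ?_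
  have hroots : {t | t ≠ 0} ⊆ {t | ((P - Q).map (eval x)).IsRoot t} := fun t ht => by
    simp [h x hx t ht]
  rw [← Polynomial.coeff_map, Polynomial.eq_zero_of_infinite_isRoot _
    ((Set.finite_singleton 0).infinite_compl.mono hroots), Polynomial.coeff_zero]

theorem weight_eq_of_eval_eq {w₁ w₂ : σ → ℕ} {p g : MvPolynomial σ R} (hg : g ≠ 0)
    (h : ∀ x, eval x g ≠ 0 → ∀ t ≠ 0,
      eval (fun i => x i * t ^ w₁ i) p = eval (fun i => x i * t ^ w₂ i) p)
    {m : σ →₀ ℕ} (hm : m ∈ p.support) : Finsupp.weight w₁ m = Finsupp.weight w₂ m := by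
  classical
  have hscale : weightScale w₁ p = weightScale w₂ p :=
    polynomial_eq_of_eval_map_eq hg fun x hx t ht => by
      simp only [eval_map_weightScale, h x hx t ht]
  have hcoeff := congrArg (fun P => coeff m (P.coeff (Finsupp.weight w₁ m))) hscale
  simp only [coeff_weightScale, coeff_weightedHomogeneousComponent] at hcoeff
  by_contra hne
  rw [if_neg (Ne.symm hne)] at hcoeff
  exact mem_support_iff.mp hm hcoeff

end Domain

/-- `t ↦ eval (update z i t) q` is a polynomial in `t`; without roots it is constant. -/
theorem eval_update_eq_of_forall_eval_update_ne_zero {σ k : Type*} [Field k] [IsAlgClosed k]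
    [DecidableEq σ] {q : MvPolynomial σ k} {z : σ → k} {i : σ}
    (h : ∀ t, eval (Function.update z i t) q ≠ 0) (t : k) :
    eval (Function.update z i t) q = eval z q := by
  set r : Polynomial k := aeval (Function.update (fun j => Polynomial.C (z j)) i Polynomial.X) q
  have hr : ∀ t, r.eval t = eval (Function.update z i t) q := fun t => by
    rw [← Polynomial.coe_aeval_eq_eval, comp_aeval_apply]
    change aeval _ q = aeval _ q
    congr 2
    funext j
    rcases eq_or_ne j i with rfl | hj <;> simp [*]
  have hroots : r.roots = 0 := Multiset.eq_zero_of_forall_notMem fun t ht =>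
    h t (hr t ▸ (Polynomial.mem_roots'.mp ht).2)
  rw [IsAlgClosed.roots_eq_zero_iff] at hroots
  conv_rhs => rw [← Function.update_eq_self i z]
  rw [← hr, ← hr, hroots, Polynomial.eval_C, Polynomial.eval_C]

end MvPolynomial

section Regular

variable {σ τ k : Type*}

def IsRegularOn [CommSemiring k] (W : Set (σ → k)) (g : (σ → k) → k) : Prop :=
  ∀ x ∈ W, ∃ p q : MvPolynomial σ k, eval x q ≠ 0 ∧
    ∀ y ∈ W, eval y q ≠ 0 → g y * eval y q = eval y p

theorem IsRegularOn.comp_aeval [CommSemiring k] {V : Set (τ → k)} {W : Set (σ → k)}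
    {g : (τ → k) → k} (hg : IsRegularOn V g) (ψ : τ → MvPolynomial σ k)
    (hψ : ∀ w ∈ W, (fun i => eval w (ψ i)) ∈ V) :
    IsRegularOn W fun w => g fun i => eval w (ψ i) := by
  intro w hw
  obtain ⟨p, q, hq, hpq⟩ := hg _ (hψ w hw)
  refine ⟨aeval ψ p, aeval ψ q, by rwa [eval_aeval], fun y hy hqy => ?_⟩
  rw [eval_aeval] at hqy ⊢
  rw [eval_aeval]
  exact hpq _ (hψ y hy) hqy

variable [Field k] {W : Set (σ → k)} {g : (σ → k) → k}

theorem mul_eq_mul_of_local_fractions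
    (hW : ∀ F : MvPolynomial σ k, (∀ w ∈ W, eval w F = 0) → F = 0)
    {p q p' q' : MvPolynomial σ k} (hq : q ≠ 0) (hq' : q' ≠ 0)
    (h : ∀ y ∈ W, eval y q ≠ 0 → g y * eval y q = eval y p)
    (h' : ∀ y ∈ W, eval y q' ≠ 0 → g y * eval y q' = eval y p') :
    p * q' = p' * q := by
  have hzero : (p * q' - p' * q) * (q * q') = 0 := hW _ fun y hy => by
    simp only [map_mul, map_sub]
    by_cases hy₁ : eval y q = 0
    · simp [hy₁]
    by_cases hy₂ : eval y q' = 0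
    · simp [hy₂]
    rw [← h y hy hy₁, ← h' y hy hy₂]
    ring
  exact sub_eq_zero.mp ((mul_eq_zero.mp hzero).resolve_right (mul_ne_zero hq hq'))

/-- The denominator `q₀` of one local fraction in lowest terms divides all the other
denominators, so it does not vanish on `W`; hence it is a constant. -/
theorem IsRegularOn.exists_eval_eq
    (hW : ∀ F : MvPolynomial σ k, (∀ w ∈ W, eval w F = 0) → F = 0)
    (hconst : ∀ q : MvPolynomial σ k, (∀ w ∈ W, eval w q ≠ 0) → ∃ c, q = C c)
    (hg : IsRegularOn W g) : ∃ G : MvPolynomial σ k, ∀ w ∈ W, g w = eval w G := by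
  rcases W.eq_empty_or_nonempty with rfl | ⟨w₀, hw₀⟩
  · exact ⟨0, by simp⟩
  choose p q hq hpq using hg
  have hq_ne : ∀ w (hw : w ∈ W), q w hw ≠ 0 := fun w hw h0 => hq w hw (by simp [h0])
  obtain ⟨q₀, p₀, c, hrel, hcq, hcp⟩ :=
    UniqueFactorizationMonoid.exists_reduced_factors _ (hq_ne w₀ hw₀) (p w₀ hw₀)
  have hc : c ≠ 0 := left_ne_zero_of_mul (hcq ▸ hq_ne w₀ hw₀)
  have hcross : ∀ w (hw : w ∈ W), p w hw * q₀ = p₀ * q w hw := fun w hw =>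
    mul_left_cancel₀ hc <| by
      linear_combination (mul_eq_mul_of_local_fractions hW (hq_ne w hw) (hq_ne w₀ hw₀)
        (hpq w hw) (hpq w₀ hw₀)) + p w hw * hcq - q w hw * hcp
  have hq₀ : ∀ w ∈ W, eval w q₀ ≠ 0 := fun w hw h0 => by
    obtain ⟨r, hr⟩ := hrel.dvd_of_dvd_mul_left ⟨p w hw, (hcross w hw).symm.trans (mul_comm _ _)⟩
    exact hq w hw (by rw [hr, map_mul, h0, zero_mul])
  obtain ⟨a, rfl⟩ := hconst q₀ hq₀
  refine ⟨C a⁻¹ * p₀, fun w hw => ?_⟩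
  have ha : a ≠ 0 := by simpa using hq₀ w₀ hw₀
  have h₁ := hpq w hw w hw (hq w hw)
  have h₂ := congrArg (eval w) (hcross w hw)
  simp only [map_mul, eval_C] at h₂ ⊢
  field_simp
  apply mul_right_cancel₀ (hq w hw)
  linear_combination a * h₁ + h₂

end Regular

def nonzeroPairs (k : Type*) [Zero k] : Set (Fin 4 → k) :=
  {w | (w 0 ≠ 0 ∨ w 1 ≠ 0) ∧ (w 2 ≠ 0 ∨ w 3 ≠ 0)}

section Segre

variable {k : Type*} [Field k]

def segre (w : Fin 4 → k) : Fin 4 → k := ![w 0 * w 2, w 0 * w 3, w 1 * w 2, w 1 * w 3]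

noncomputable def segrePoly : Fin 4 → MvPolynomial (Fin 4) k :=
  ![X 0 * X 2, X 0 * X 3, X 1 * X 2, X 1 * X 3]

theorem eval_segrePoly (w : Fin 4 → k) : (fun i => eval w (segrePoly i)) = segre w := by
  funext i; fin_cases i <;> simp [segre, segrePoly]

theorem segre_mapsTo : Set.MapsTo segre (nonzeroPairs ℂ) (quadCone \ {0}) := by
  rintro w ⟨h01, h23⟩
  refine ⟨by simp [quadCone, segre]; ring, fun h => ?_⟩
  have h' := fun i => congrFun h i
  simp only [segre, Pi.zero_apply] at h'
  rcases h01 with h0 | h1 <;> rcases h23 with h2 | h3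
  · exact mul_ne_zero h0 h2 (by simpa using h' 0)
  · exact mul_ne_zero h0 h3 (by simpa using h' 1)
  · exact mul_ne_zero h1 h2 (by simpa using h' 2)
  · exact mul_ne_zero h1 h3 (by simpa using h' 3)

theorem segre_surjOn : Set.SurjOn segre (nonzeroPairs ℂ) (quadCone \ {0}) := by
  rintro x ⟨hx, hx0⟩
  have hc : x 0 * x 3 = x 1 * x 2 := sub_eq_zero.mp hx
  obtain ⟨i, hi⟩ := Function.ne_iff.mp hx0
  fin_cases i <;> simp only [Fin.zero_eta, Fin.mk_one, Fin.reduceFinMk, Pi.zero_apply] at hi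
  · refine ⟨![x 0, x 2, 1, x 1 / x 0], ⟨.inl hi, .inl one_ne_zero⟩, ?_⟩
    ext j; fin_cases j <;> simp [segre] <;> field_simp
    linear_combination -hc
  · refine ⟨![x 1, x 3, x 0 / x 1, 1], ⟨.inl hi, .inr one_ne_zero⟩, ?_⟩
    ext j; fin_cases j <;> simp [segre] <;> field_simp
    linear_combination hc
  · refine ⟨![x 0 / x 2, 1, x 2, x 3], ⟨.inr one_ne_zero, .inl hi⟩, ?_⟩
    ext j; fin_cases j <;> simp [segre] <;> field_simp
    linear_combination hc
  · refine ⟨![x 1 / x 3, 1, x 2, x 3], ⟨.inr one_ne_zero, .inr hi⟩, ?_⟩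
    ext j; fin_cases j <;> simp [segre] <;> field_simp
    linear_combination -hc

theorem eq_zero_of_forall_eval_nonzeroPairs [Infinite k] {F : MvPolynomial (Fin 4) k}
    (h : ∀ w ∈ nonzeroPairs k, eval w F = 0) : F = 0 :=
  eq_zero_of_eval_eq_zero_of_eval_ne_zero (g := X 0 * X 2)
    (mul_ne_zero (X_ne_zero _) (X_ne_zero _))
    fun x hx => h x ⟨.inl (left_ne_zero_of_mul (by simpa using hx)),
      .inl (right_ne_zero_of_mul (by simpa using hx))⟩

/-- Any two points of the dense set `{w 1 ≠ 0, w 3 ≠ 0}` are joined by a chain of coordinate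
lines inside `nonzeroPairs k`, along each of which `q` is constant. -/
theorem exists_eq_C_of_forall_eval_nonzeroPairs_ne_zero [IsAlgClosed k]
    {q : MvPolynomial (Fin 4) k} (h : ∀ w ∈ nonzeroPairs k, eval w q ≠ 0) : ∃ c, q = C c := by
  have hline : ∀ z i, (∀ t, Function.update z i t ∈ nonzeroPairs k) →
      ∀ t, eval z q = eval (Function.update z i t) q := fun z i hz t =>
    (eval_update_eq_of_forall_eval_update_ne_zero (fun t => h _ (hz t)) t).symm
  have hconst : ∀ z : Fin 4 → k, z 1 ≠ 0 → z 3 ≠ 0 → eval z q = eval ![1, 0, 1, 0] q := by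
    intro z h1 h3
    have hz : ![(1 : k), 0, 1, 0] = Function.update
        (Function.update (Function.update (Function.update z 0 1) 2 1) 1 0) 3 0 := by
      ext i; fin_cases i <;> rfl
    rw [hz, hline z 0, hline _ 2, hline _ 1, hline _ 3] <;>
      intro t <;> simp [nonzeroPairs, h1, h3]
  refine ⟨eval ![1, 0, 1, 0] q, sub_eq_zero.mp ?_⟩
  refine eq_zero_of_eval_eq_zero_of_eval_ne_zero (g := X 1 * X 3)
    (mul_ne_zero (X_ne_zero _) (X_ne_zero _)) fun z hz => ?_
  rw [map_sub, eval_C, sub_eq_zero]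
  simp only [map_mul, eval_X] at hz
  exact hconst z (left_ne_zero_of_mul hz) (right_ne_zero_of_mul hz)

/-- `(t a, t b, c, d)` and `(a, b, t c, t d)` have the same image under `segre`. -/
theorem add_eq_add_of_eval_segre_eq [Infinite k] {G : MvPolynomial (Fin 4) k}
    (hG : ∀ w ∈ nonzeroPairs k, ∀ w' ∈ nonzeroPairs k, segre w = segre w' → eval w G = eval w' G)
    {m : Fin 4 →₀ ℕ} (hm : m ∈ G.support) : m 0 + m 1 = m 2 + m 3 := by
  have hweight := weight_eq_of_eval_eq (w₁ := ![1, 1, 0, 0]) (w₂ := ![0, 0, 1, 1])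
    (mul_ne_zero (X_ne_zero 0) (X_ne_zero 2)) (fun x hx t ht => by
      have hx0 : x 0 ≠ 0 := left_ne_zero_of_mul (by simpa using hx)
      have hx2 : x 2 ≠ 0 := right_ne_zero_of_mul (by simpa using hx)
      refine hG _ ⟨.inl ?_, .inl ?_⟩ _ ⟨.inl ?_, .inl ?_⟩ ?_
      · simp [hx0, ht]
      · simp [hx2]
      · simp [hx0]
      · simp [hx2, ht]
      · ext i; fin_cases i <;> simp [segre] <;> ring) hm
  simpa [Finsupp.weight_apply, Finsupp.sum_fintype, Fin.sum_univ_four] using hweight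

theorem monomial_mem_range_aeval_segrePoly {m : Fin 4 →₀ ℕ} (hm : m 0 + m 1 = m 2 + m 3)
    (c : k) : monomial m c ∈ (aeval (R := k) segrePoly).range := by
  obtain ⟨e₀, e₁, e₂, e₃, h0, h1, h2, h3⟩ : ∃ e₀ e₁ e₂ e₃ : ℕ,
      m 0 = e₀ + e₁ ∧ m 1 = e₂ + e₃ ∧ m 2 = e₀ + e₂ ∧ m 3 = e₁ + e₃ :=
    ⟨min (m 0) (m 2), m 0 - min (m 0) (m 2), m 2 - min (m 0) (m 2),
      m 3 - (m 0 - min (m 0) (m 2)), by omega, by omega, by omega, by omega⟩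
  refine (AlgHom.mem_range _).mpr
    ⟨monomial (Finsupp.equivFunOnFinite.symm ![e₀, e₁, e₂, e₃]) c, ?_⟩
  rw [aeval_monomial, monomial_eq, Finsupp.prod_fintype _ _ fun _ => pow_zero _,
    Finsupp.prod_fintype _ _ fun _ => pow_zero _]
  simp only [Fin.prod_univ_four, segrePoly, Finsupp.coe_equivFunOnFinite_symm, h0, h1, h2, h3,
    Matrix.cons_val_zero, Matrix.cons_val_one, Matrix.cons_val_two, Matrix.cons_val_three,
    Matrix.head_cons, Matrix.tail_cons, algebraMap_eq]
  ring

theorem exists_aeval_segrePoly_eq {G : MvPolynomial (Fin 4) k}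
    (hG : ∀ m ∈ G.support, m 0 + m 1 = m 2 + m 3) :
    ∃ P : MvPolynomial (Fin 4) k, aeval segrePoly P = G := by
  rw [← AlgHom.mem_range, G.as_sum]
  exact Subalgebra.sum_mem _ fun m hm => monomial_mem_range_aeval_segrePoly (hG m hm) _

end Segre

open Topology Filter in
theorem quadCone_subset_closure_diff_zero : quadCone ⊆ closure (quadCone \ {0}) := by
  intro x hx
  by_cases hx0 : x = 0
  · subst hx0
    refine mem_closure_of_tendsto (b := 𝓝[≠] (0 : ℂ)) (f := Pi.single 0) ?_ ?_
    · simpa using ((continuous_single (A := fun _ : Fin 4 => ℂ) 0).tendsto 0).mono_left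
        nhdsWithin_le_nhds
    · filter_upwards [self_mem_nhdsWithin] with t ht
      exact ⟨by simp [quadCone], by simpa using ht⟩
  · exact subset_closure ⟨hx, hx0⟩

/-- Hartogs extension for the cone: if `f` is a regular function
on the complement of the origin in the cone `V(ad - bc)` — i.e. near every
point of the punctured cone it agrees with a ratio `p/q` of polynomials with
nonvanishing denominator — then `f` is the restriction of a polynomial `P` in
`a,b,c,d`, and the extension is unique (any two polynomials restricting to `f`
on the punctured cone agree on the whole cone). -/
theorem stmt_8 (f : (Fin 4 → ℂ) → ℂ)
    (hreg : ∀ x ∈ quadCone, x ≠ 0 →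
      ∃ p q : MvPolynomial (Fin 4) ℂ, eval x q ≠ 0 ∧
        ∀ y ∈ quadCone, y ≠ 0 → eval y q ≠ 0 → f y * eval y q = eval y p) :
    ∃ P : MvPolynomial (Fin 4) ℂ,
      (∀ x ∈ quadCone, x ≠ 0 → f x = eval x P) ∧
      ∀ Q : MvPolynomial (Fin 4) ℂ,
        (∀ x ∈ quadCone, x ≠ 0 → f x = eval x Q) →
        ∀ x ∈ quadCone, eval x P = eval x Q := by
  have hf : IsRegularOn (quadCone \ {0}) f := fun x hx => by
    obtain ⟨p, q, hq, hpq⟩ := hreg x hx.1 hx.2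
    exact ⟨p, q, hq, fun y hy => hpq y hy.1 hy.2⟩
  have hpull := hf.comp_aeval segrePoly fun w hw => eval_segrePoly w ▸ segre_mapsTo hw
  obtain ⟨G, hG⟩ := hpull.exists_eval_eq (fun _ => eq_zero_of_forall_eval_nonzeroPairs)
    (fun _ => exists_eq_C_of_forall_eval_nonzeroPairs_ne_zero)
  simp only [eval_segrePoly] at hG
  obtain ⟨P, rfl⟩ := exists_aeval_segrePoly_eq fun m =>
    add_eq_add_of_eval_segre_eq fun w hw w' hw' h => by rw [← hG w hw, ← hG w' hw', h]
  have hP : ∀ x ∈ quadCone, x ≠ 0 → f x = eval x P := by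
    intro x hx hx0
    obtain ⟨w, hw, rfl⟩ := segre_surjOn ⟨hx, hx0⟩
    rw [hG w hw, eval_aeval, eval_segrePoly]
  refine ⟨P, hP, fun Q hQ => ?_⟩
  refine Set.EqOn.of_subset_closure (fun x hx => ?_) (continuous_eval P).continuousOn
    (continuous_eval Q).continuousOn Set.sdiff_subset quadCone_subset_closure_diff_zero
  rw [← hP x hx.1 hx.2, hQ x hx.1 hx.2]
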